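/- arXiv:1710.01793 — 9 statements merged into one kernel-verified Lean document; each statement's English description precedes it below -/
import Mathlib

section
/- Let R be a ring and M a proper submodule of an R-module X. If M is rigid (Ext^1_R(M,M) = 0) and M is a trace module in X (M = Tr_X(M)), then Hom_R(M, X/M) = 0. -/
open CategoryTheory

/-- If `M ⊊ X` is rigid (`Ext¹_R(M,M) = 0`) and a trace module in `X`, then
`Hom_R(M, X/M) = 0`. -/
theorem hom_quotient_eq_zero_of_rigid_trace {R : Type} [Ring R] {X : Type} [AddCommGroup X]
    [Module R X] (M : Submodule R X) (hproper : M ≠ ⊤)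
    (hrigid : Subsingleton (((Ext ℤ (ModuleCat R) 1).obj
      (Opposite.op (ModuleCat.of R M))).obj (ModuleCat.of R M)))
    (htrace : ∀ α : M →ₗ[R] X, LinearMap.range α ≤ M) :
    ∀ f : M →ₗ[R] X ⧸ M, f = 0 := by
  intro f
  classical
  let Mc := ModuleCat.of R M
  let Xc := ModuleCat.of R X
  let Qc := ModuleCat.of R (X ⧸ M)
  let ι : Mc ⟶ Xc := ModuleCat.ofHom M.subtype
  let qc : Xc ⟶ Qc := ModuleCat.ofHom M.mkQ
  let fc : Mc ⟶ Qc := ModuleCat.ofHom f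
  haveI : Epi qc := by
    rw [ModuleCat.epi_iff_surjective]
    exact Submodule.mkQ_surjective M
  let P := ProjectiveResolution.of Mc
  -- lift `π₀ ≫ fc` through the epi `qc`
  let u : P.complex.X 0 ⟶ Xc := Projective.factorThru (P.π.f 0 ≫ fc) qc
  have hu : u ≫ qc = P.π.f 0 ≫ fc := Projective.factorThru_comp _ _
  -- the composite `d 1 0 ≫ u` lands in `M`
  have hmem : ∀ x, (P.complex.d 1 0 ≫ u) x ∈ M := by
    intro x
    have : qc ((P.complex.d 1 0 ≫ u) x) = 0 := by
      have h0 : P.complex.d 1 0 ≫ u ≫ qc = 0 := by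
        rw [hu]
        exact (Category.assoc _ _ _).symm.trans ((congrArg (· ≫ fc) P.complex_d_comp_π_f_zero).trans Limits.zero_comp)
      have := congrArg (fun φ => φ x) h0
      simpa using this
    rwa [show qc ((P.complex.d 1 0 ≫ u) x) = Submodule.Quotient.mk ((P.complex.d 1 0 ≫ u) x)
      from rfl, Submodule.Quotient.mk_eq_zero] at this
  let g : P.complex.X 1 ⟶ Mc := ModuleCat.ofHom (LinearMap.codRestrict M (P.complex.d 1 0 ≫ u).hom hmem)
  have hgι : g ≫ ι = P.complex.d 1 0 ≫ u := by
    ext x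
    rfl
  -- g is a cocycle
  have hcocycle : P.complex.d 2 1 ≫ g = 0 := by
    haveI : Mono ι := by
      rw [ModuleCat.mono_iff_injective]
      exact Subtype.val_injective
    rw [← cancel_mono ι, Category.assoc, hgι, ← Category.assoc,
      P.complex.d_comp_d, Limits.zero_comp, Limits.zero_comp]
  -- Ext vanishing ⇒ exactness of the yoneda complex at 1
  have hex : (P.complex.linearYonedaObj ℤ Mc).ExactAt 1 := by
    rw [HomologicalComplex.exactAt_iff_isZero_homology]
    exact Limits.IsZero.of_iso (ModuleCat.isZero_of_subsingleton _) (P.isoExt (R := ℤ) 1 Mc).symm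
  rw [HomologicalComplex.exactAt_iff' _ 0 1 2 (by simp) (by simp)] at hex
  rw [ShortComplex.moduleCat_exact_iff] at hex
  -- g, as an element of the yoneda complex in degree 1, is killed by d 1 2
  have hg0 : ((P.complex.linearYonedaObj ℤ Mc).d 1 2) g = 0 := by
    exact hcocycle
  obtain ⟨(h : P.complex.X 0 ⟶ Mc), hh⟩ := hex g hg0
  have hh' : P.complex.d 1 0 ≫ h = g := by
    exact hh
  -- `u - h ≫ ι` kills the image of d 1 0, hence descends to `v : M ⟶ X`
  have hv0 : P.complex.d 1 0 ≫ (u - h ≫ ι) = 0 := by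
    rw [Preadditive.comp_sub, ← Category.assoc, hh', hgι, sub_self]
  obtain ⟨v₀, hvπ₀⟩ :=
    Limits.CokernelCofork.IsColimit.desc' P.isColimitCokernelCofork (u - h ≫ ι) hv0
  let v : Mc ⟶ Xc := v₀
  have hvπ : P.π.f 0 ≫ v = u - h ≫ ι := hvπ₀
  have hιq : ι ≫ qc = 0 := by
    ext x
    show M.mkQ (M.subtype x) = 0
    rw [Submodule.mkQ_apply, Submodule.Quotient.mk_eq_zero]
    exact x.2
  have hvq : v ≫ qc = fc := by
    haveI : Epi (P.π.f 0) := inferInstance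
    apply (cancel_epi (P.π.f 0)).1
    refine (Category.assoc _ _ _).symm.trans ?_
    rw [hvπ, Preadditive.sub_comp,
      Category.assoc, hιq, Limits.comp_zero, sub_zero, hu]
  -- trace hypothesis kills `v ≫ qc`
  ext m
  have hm : f m = M.mkQ (v m) := by
    have := congrArg (fun φ => φ m) hvq.symm
    simp [fc, qc] at this
    exact this
  have : v m ∈ M := htrace v.hom ⟨m, rfl⟩
  rw [LinearMap.zero_apply, hm, ← Submodule.Quotient.mk_eq_zero] at *
  simpa [Submodule.Quotient.mk_eq_zero] using this
end

section
/- Let R be a ring, M ⊊ X R-modules with Hom_R(M, X/M) ≠ 0 and M a trace module in X. Then Ext^1_R(M,M) ≠ 0. -/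
open CategoryTheory Limits

/-- If `M ⊊ X`, `Hom_R(M, X/M) ≠ 0`, and `M` is a trace module in `X`,
then `Ext¹_R(M,M) ≠ 0`. -/
theorem ext_ne_zero_of_proper_trace {R : Type} [Ring R] {X : Type} [AddCommGroup X]
    [Module R X] (M : Submodule R X) (hproper : M ≠ ⊤)
    (hhom : ∃ f : M →ₗ[R] X ⧸ M, f ≠ 0)
    (htrace : ∀ α : M →ₗ[R] X, LinearMap.range α ≤ M) :
    ¬ Subsingleton (((Ext ℤ (ModuleCat R) 1).obj
      (Opposite.op (ModuleCat.of R M))).obj (ModuleCat.of R M)) := by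
  intro hsub
  obtain ⟨f, hf⟩ := hhom
  let Mc : ModuleCat R := ModuleCat.of R M
  let Xc : ModuleCat R := ModuleCat.of R X
  let Qc : ModuleCat R := ModuleCat.of R (X ⧸ M)
  obtain ⟨P⟩ := (HasProjectiveResolution.out (Z := Mc))
  let p : P.complex.X 0 ⟶ Mc := P.π.f 0
  let d10 : P.complex.X 1 ⟶ P.complex.X 0 := P.complex.d 1 0
  let d21 : P.complex.X 2 ⟶ P.complex.X 1 := P.complex.d 2 1
  let ι : Mc ⟶ Xc := ModuleCat.ofHom M.subtype
  let π : Xc ⟶ Qc := ModuleCat.ofHom M.mkQ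
  let fc : Mc ⟶ Qc := ModuleCat.ofHom f
  have hπ_epi : Epi π := (ModuleCat.epi_iff_surjective _).2 (Submodule.mkQ_surjective M)
  let g : P.complex.X 0 ⟶ Xc := Projective.factorThru (p ≫ fc) π
  have hg : g ≫ π = p ≫ fc := Projective.factorThru_comp _ _
  have hdp : d10 ≫ p = 0 := P.complex_d_comp_π_f_zero
  have hmem : ∀ x, g (d10 x) ∈ M := by
    intro x
    have h1 : π (g (d10 x)) = fc (p (d10 x)) := by
      have := congrArg (fun (u : P.complex.X 0 ⟶ Qc) => u (d10 x)) hg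
      simpa using this
    have h2 : p (d10 x) = 0 := by
      have := congrArg (fun (u : P.complex.X 1 ⟶ Mc) => u x) hdp
      simpa using this
    have : M.mkQ (g (d10 x)) = 0 := by
      rw [show M.mkQ (g (d10 x)) = π (g (d10 x)) from rfl, h1, h2, map_zero]
    simpa [Submodule.Quotient.mk_eq_zero] using this
  let c : P.complex.X 1 ⟶ Mc :=
    ModuleCat.ofHom (LinearMap.codRestrict M (d10 ≫ g : P.complex.X 1 ⟶ Xc).hom hmem)
  have hcι : c ≫ ι = d10 ≫ g := rfl
  have hc2 : d21 ≫ c = 0 := by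
    ext x
    have hd : d10 (d21 x) = 0 := by
      have h9 : d21 ≫ d10 = 0 := P.complex.d_comp_d 2 1 0
      calc d10 (d21 x) = (d21 ≫ d10) x := rfl
        _ = (0 : P.complex.X 2 ⟶ P.complex.X 0) x := by rw [h9]
        _ = 0 := rfl
    show M.subtype ((d21 ≫ c) x) = M.subtype ((0 : P.complex.X 2 ⟶ Mc) x)
    have h5 : M.subtype ((d21 ≫ c) x) = g (d10 (d21 x)) := rfl
    rw [h5, hd, map_zero]
    rfl
  -- homology vanishing
  let K := P.complex.linearYonedaObj ℤ Mc
  have hzero : IsZero (K.homology 1) := by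
    have h1 : IsZero (((Ext ℤ (ModuleCat R) 1).obj (Opposite.op Mc)).obj Mc) :=
      ModuleCat.isZero_of_subsingleton _
    exact IsZero.of_iso h1 (P.isoExt 1 Mc).symm
  have hex : (K.sc' 0 1 2).Exact := by
    rw [← HomologicalComplex.exactAt_iff' K 0 1 2 (by simp) (by simp)]
    exact (HomologicalComplex.exactAt_iff_isZero_homology K 1).2 hzero
  have hcK : (K.sc' 0 1 2).g c = 0 := by
    show (K.d 1 2) c = 0
    have : (K.d 1 2) c = d21 ≫ c := rfl
    rw [this, hc2]
    rfl
  obtain ⟨h0, hh⟩ := (ShortComplex.moduleCat_exact_iff _).1 hex c hcK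
  let h : P.complex.X 0 ⟶ Mc := h0
  have hh' : d10 ≫ (h : P.complex.X 0 ⟶ Mc) = c := hh
  -- descend
  let γ : P.complex.X 0 ⟶ Xc := g - (h ≫ ι)
  have hγ : d10 ≫ γ = 0 := by
    show d10 ≫ (g - (h ≫ ι)) = 0
    rw [Preadditive.comp_sub, ← Category.assoc, hh', hcι, sub_self]
  have hpepi : Epi p := by show Epi (P.π.f 0); infer_instance
  let S : ShortComplex (ModuleCat R) := ShortComplex.mk d10 p hdp
  have hS : S.Exact := P.exact₀
  have hSepi : Epi S.g := hpepi
  let α : Mc ⟶ Xc := hS.desc γ hγ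
  have hα : p ≫ α = γ := hS.g_desc γ hγ
  have hαπ : α ≫ π = fc := by
    rw [← cancel_epi p, ← Category.assoc, hα]
    show (g - (h ≫ ι)) ≫ π = p ≫ fc
    have hιπ : ι ≫ π = 0 := by
      ext m
      show M.mkQ (M.subtype m) = 0
      simpa [Submodule.Quotient.mk_eq_zero] using m.2
    rw [Preadditive.sub_comp, hg, Category.assoc, hιπ, Limits.comp_zero, sub_zero]
  have hres : ∀ m : M, α.hom m ∈ M := by
    intro m
    exact htrace α.hom ⟨m, rfl⟩
  apply hf
  ext m
  have h2 := congrArg (fun (u : Mc ⟶ Qc) => u m) hαπ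
  have h1 : M.mkQ (α.hom m) = f m := by exact h2
  have h3 : M.mkQ (α.hom m) = 0 := by
    simpa [Submodule.Quotient.mk_eq_zero] using hres m
  simp only [LinearMap.zero_apply]
  rw [← h1, h3]
end

section
/- Let R be a commutative Noetherian ring and I an ideal of R. If Ext^1_R(R/I, R) = 0, then I is a trace ideal, i.e., every R-homomorphism I → R has image contained in I. -/
open CategoryTheory

/-- If `Ext¹_R(R/I, R) = 0` then `I` is a trace ideal: every `R`-homomorphism `I → R`
has image contained in `I`. -/
theorem isTraceIdeal_of_ext_vanishes {R : Type} [CommRing R] [IsNoetherianRing R]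
    (I : Ideal R)
    (hext : Subsingleton (((Ext R (ModuleCat R) 1).obj
      (Opposite.op (ModuleCat.of R (R ⧸ I)))).obj (ModuleCat.of R R))) :
    ∀ f : I →ₗ[R] R, ∀ x : I, f x ∈ I := by
  intro f x
  let Y : ModuleCat R := ModuleCat.of R R
  let Z : ModuleCat R := ModuleCat.of R (R ⧸ I)
  let P : ProjectiveResolution Z := ProjectiveResolution.of Z
  let K := P.complex.linearYonedaObj R Y
  -- Ext¹ vanishing gives exactness of the Hom complex at 1
  have hiso := P.isoExt (R := R) 1 Y
  have hzero : Limits.IsZero (K.homology 1) :=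
    (ModuleCat.isZero_of_subsingleton _).of_iso hiso.symm
  have hex1 : K.ExactAt 1 := (K.exactAt_iff_isZero_homology 1).2 hzero
  have hexact := (K.exactAt_iff' 0 1 2 (by simp) (by simp)).1 hex1
  rw [ShortComplex.moduleCat_exact_iff] at hexact
  -- set up the lift p : P₀ → R of the augmentation P₀ → R/I
  let e0 := HomologicalComplex.singleObjXSelf (ComplexShape.down ℕ) 0 Z
  let π' : P.complex.X 0 ⟶ Z := P.π.f 0 ≫ e0.hom
  have hπ'surj : Function.Surjective π' :=
    (ModuleCat.epi_iff_surjective _).1 (epi_comp _ _)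
  let mkQ' : Y ⟶ Z := ModuleCat.ofHom (I.mkQ)
  have hmkQepi : Epi mkQ' := (ModuleCat.epi_iff_surjective _).2 (Submodule.mkQ_surjective I)
  let p : P.complex.X 0 ⟶ Y := Projective.factorThru π' mkQ'
  let pl : ↑(P.complex.X 0) →ₗ[R] R := p.hom
  have hp : p ≫ mkQ' = π' := Projective.factorThru_comp _ _
  have hpa : ∀ a : P.complex.X 0, I.mkQ (pl a) = π' a := by
    intro a
    have := ConcreteCategory.congr_hom hp a
    rwa [ModuleCat.comp_apply] at this
  -- kernel description of π'
  have h0 := P.exact₀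
  rw [ShortComplex.moduleCat_exact_iff] at h0
  have hker : ∀ a : P.complex.X 0, π' a = 0 → ∃ b, P.complex.d 1 0 b = a := by
    intro a ha
    apply h0
    have hinj : Function.Injective e0.hom :=
      (ModuleCat.mono_iff_injective _).1 inferInstance
    apply hinj
    rw [map_zero]; exact ha
  -- the image of p ∘ d₁ is contained in I
  let d10 : P.complex.X 1 ⟶ P.complex.X 0 := P.complex.d 1 0
  have hdπ : d10 ≫ P.π.f 0 = 0 := P.complex_d_comp_π_f_zero
  have hdp : ∀ b : P.complex.X 1, pl (d10 b) ∈ I := by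
    intro b
    have h2 := ConcreteCategory.congr_hom hdπ b
    rw [ModuleCat.comp_apply] at h2
    have h2' : P.π.f 0 (d10 b) = 0 := h2
    have h1 : π' (d10 b) = 0 := by
      show (P.π.f 0 ≫ e0.hom) (d10 b) = 0
      rw [ModuleCat.comp_apply, h2', map_zero]
    rw [← Submodule.Quotient.mk_eq_zero I, ← Submodule.mkQ_apply, hpa, h1]
  -- the cocycle h = f ∘ (p ∘ d₁ corestricted to I)
  let g : ↑(P.complex.X 1) →ₗ[R] I := LinearMap.codRestrict I (pl ∘ₗ d10.hom) hdp
  let h : P.complex.X 1 ⟶ Y := ModuleCat.ofHom (f ∘ₗ g)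
  have hco : (K.sc' 0 1 2).g h = 0 := by
    show (K.d 1 2) h = 0
    rw [ChainComplex.linearYonedaObj_d]
    show Linear.leftComp R Y (P.complex.d 2 1) h = 0
    rw [Linear.leftComp_apply]
    ext b
    have h3 := ConcreteCategory.congr_hom (P.complex.d_comp_d 2 1 0) b
    rw [ModuleCat.comp_apply] at h3
    have hd : d10 (P.complex.d 2 1 b) = 0 := h3
    show (P.complex.d 2 1 ≫ h) b = 0
    rw [ModuleCat.comp_apply]
    show f (g (P.complex.d 2 1 b)) = 0
    have hg0 : g (P.complex.d 2 1 b) = 0 := by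
      apply Subtype.ext
      show pl (d10 (P.complex.d 2 1 b)) = 0
      rw [hd, map_zero]
    rw [hg0, map_zero]
  -- the cocycle is a coboundary: there is q : P₀ → R with q ∘ d₁ = h
  obtain ⟨q, hq⟩ := hexact h hco
  let qm : P.complex.X 0 ⟶ Y := q
  let ql : ↑(P.complex.X 0) →ₗ[R] R := qm.hom
  have hq1 : Linear.leftComp R Y d10 qm = h := by
    have : (K.d 0 1) q = h := hq
    rwa [ChainComplex.linearYonedaObj_d] at this
  have hq' : ∀ b : P.complex.X 1, ql (d10 b) = f (g b) := by
    intro b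
    rw [Linear.leftComp_apply] at hq1
    have h4 := ConcreteCategory.congr_hom hq1 b
    rwa [ModuleCat.comp_apply] at h4
  -- choose a₁ hitting 1 mod I
  obtain ⟨a₁, ha₁⟩ := hπ'surj (mkQ' (1 : R))
  have hmk : I.mkQ (pl a₁) = I.mkQ (1 : R) := by rw [hpa, ha₁]; rfl
  have hi₁ : pl a₁ - 1 ∈ I := by
    rw [← Submodule.Quotient.mk_eq_zero I, Submodule.Quotient.mk_sub, sub_eq_zero]
    exact hmk
  let i₁ : I := ⟨pl a₁ - 1, hi₁⟩
  -- the element x • a₁ lies in the kernel of π'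
  let a : ↑(P.complex.X 0) := (x : R) • a₁
  have hpax : pl a = (x : R) + (x : R) * (i₁ : R) := by
    show pl ((x : R) • a₁) = _
    rw [map_smul, smul_eq_mul]
    show (x : R) * pl a₁ = (x : R) + (x : R) * (pl a₁ - 1)
    ring
  have hπa : π' a = 0 := by
    rw [← hpa, hpax, Submodule.mkQ_apply, Submodule.Quotient.mk_eq_zero]
    exact I.add_mem x.2 (I.mul_mem_left _ i₁.2)
  obtain ⟨b, hb⟩ := hker a hπa
  -- compute q a in two ways
  have e1 : ql a = (x : R) * ql a₁ := by
    show ql ((x : R) • a₁) = _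
    rw [map_smul, smul_eq_mul]
  have e2 : ql a = f x + (x : R) * f i₁ := by
    have hb' : d10 b = a := hb
    rw [← hb', hq' b]
    have hgb : g b = x + (x : R) • i₁ := by
      apply Subtype.ext
      show pl (d10 b) = (x : R) + (x : R) * (i₁ : R)
      rw [hb']; exact hpax
    rw [hgb, map_add, map_smul, smul_eq_mul]
  have hfx : f x = (x : R) * (ql a₁ - f i₁) := by
    have h5 := e1.symm.trans e2
    linear_combination -h5
  rw [hfx]
  exact I.mul_mem_right _ x.2
end

section
/- Let R be a commutative Noetherian ring and I an ideal with grade(I) ≥ 2 (i.e., I contains a regular sequence of length 2 on R). Then I is a trace ideal. -/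
/-- If `I` contains an `R`-regular sequence of length 2 (grade `I ≥ 2`), then `I` is a
trace ideal. -/
theorem isTraceIdeal_of_grade_ge_two {R : Type*} [CommRing R] [IsNoetherianRing R]
    (I : Ideal R)
    (hgrade : ∃ x ∈ I, ∃ y ∈ I, IsSMulRegular R x ∧
      IsSMulRegular (R ⧸ Ideal.span {x}) (Ideal.Quotient.mk (Ideal.span {x}) y)) :
    ∀ f : I →ₗ[R] R, ∀ z : I, f z ∈ I := by
  obtain ⟨x, hx, y, hy, hxr, hyr⟩ := hgrade
  intro f z
  have key : ∀ a b : I, (a : R) * f b = (b : R) * f a := by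
    intro a b
    have h1 : f ((a : R) • b) = (a : R) * f b := by
      rw [map_smul, smul_eq_mul]
    have h2 : (a : R) • b = (b : R) • a := by
      ext
      simp [mul_comm]
    rw [h2, map_smul, smul_eq_mul] at h1
    exact h1.symm
  have h1 : y * f ⟨x, hx⟩ = x * f ⟨y, hy⟩ := key ⟨y, hy⟩ ⟨x, hx⟩
  have hfx : f ⟨x, hx⟩ ∈ Ideal.span {x} := by
    have hz : (Ideal.Quotient.mk (Ideal.span {x}) y) •
        (Ideal.Quotient.mk (Ideal.span {x}) (f ⟨x, hx⟩)) =
        (Ideal.Quotient.mk (Ideal.span {x}) y) • (0 : R ⧸ Ideal.span {x}) := by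
      rw [smul_zero, smul_eq_mul, ← map_mul, h1]
      exact Ideal.Quotient.eq_zero_iff_mem.mpr
        (Ideal.mul_mem_right _ _ (Ideal.subset_span rfl))
    exact Ideal.Quotient.eq_zero_iff_mem.mp (hyr hz)
  obtain ⟨c, hc⟩ := Ideal.mem_span_singleton'.mp hfx
  have h2 : x * f z = (z : R) * f ⟨x, hx⟩ := key ⟨x, hx⟩ z
  have h3 : x * f z = x * ((z : R) * c) := by rw [h2, ← hc]; ring
  have hfz : f z = (z : R) * c := hxr (by simpa [smul_eq_mul] using h3)
  rw [hfz]
  exact Ideal.mul_mem_right _ _ z.2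
end

section
/- Let R be a commutative Noetherian local ring that is Artinian and Gorenstein (equivalently, self-injective). Then every ideal I of R is a trace ideal. -/
/-- In a commutative Noetherian local Artinian Gorenstein (i.e. self-injective) ring,
every ideal is a trace ideal. -/
theorem isTraceIdeal_of_selfInjective {R : Type*} [CommRing R] [IsNoetherianRing R]
    [IsLocalRing R] [IsArtinianRing R] (hinj : Module.Injective R R) (I : Ideal R) :
    ∀ f : I →ₗ[R] R, ∀ x : I, f x ∈ I := by
  intro f x
  obtain ⟨g, hg⟩ := hinj.out I.subtype (Submodule.injective_subtype I) f
  have h1 : f x = g (x : R) := (hg x).symm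
  have h2 : g (x : R) = (x : R) * g 1 := by
    rw [← smul_eq_mul, ← map_smul, smul_eq_mul, mul_one]
  rw [h1, h2]
  exact I.mul_mem_right _ x.2
end

section
/- Let R be a commutative Noetherian ring and M, N finitely generated R-modules with M ⊗_R N ≠ 0. Then Hom_R(M,N) = 0 if and only if the annihilator Ann_R(M) contains an element that is a nonzerodivisor on N. -/
section AuxHomVanish

variable {R : Type*} [CommRing R]

open TensorProduct


lemma aux_det_trick {M : Type*} [AddCommGroup M] [Module R M] [Module.Finite R M]
    {p : Ideal R} (hp : p.IsPrime) (hann : Module.annihilator R M ≤ p)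
    {s : R} (hs : ∀ m : M, s • m ∈ (p • ⊤ : Submodule R M)) : s ∈ p := by
  obtain ⟨q, hmonic, -, hcoeff, heval⟩ :=
    LinearMap.exists_monic_and_natDegree_eq_and_coeff_mem_pow_and_aeval_eq_zero R
      (s • (LinearMap.id : M →ₗ[R] M)) p (by rintro _ ⟨m, rfl⟩; exact hs m)
  have hsid : (s • (LinearMap.id : M →ₗ[R] M)) = (Algebra.ofId R (Module.End R M)) s := by
    ext m; simp [Algebra.ofId_apply, Module.algebraMap_end_apply]
  rw [hsid, Polynomial.aeval_algHom_apply] at heval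
  have hmem : Polynomial.aeval s q ∈ Module.annihilator R M := by
    rw [Module.mem_annihilator]
    intro m
    have : ((Algebra.ofId R (Module.End R M)) (Polynomial.aeval s q)) m = 0 := by
      rw [heval]; rfl
    simpa [Algebra.ofId_apply, Module.algebraMap_end_apply] using this
  have haev : Polynomial.aeval s q = q.eval s := by
    rw [Polynomial.coe_aeval_eq_eval]
  rw [haev] at hmem
  have hql := hann hmem
  -- q.eval s = ∑_{i ≤ n} c_i s^i with c_n = 1
  have hev : q.eval s = (∑ i ∈ Finset.range q.natDegree, q.coeff i * s ^ i) + s ^ q.natDegree := by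
    rw [Polynomial.eval_eq_sum_range, Finset.sum_range_succ, hmonic.coeff_natDegree, one_mul]
  have hsumo : (∑ i ∈ Finset.range q.natDegree, q.coeff i * s ^ i) ∈ p := by
    refine Ideal.sum_mem _ fun i hi => Ideal.mul_mem_right _ _ ?_
    have := hcoeff i
    refine Ideal.pow_le_self ?_ this
    have := Finset.mem_range.mp hi
    omega
  have hpow : s ^ q.natDegree ∈ p := by
    have : s ^ q.natDegree = q.eval s - (∑ i ∈ Finset.range q.natDegree, q.coeff i * s ^ i) := by
      rw [hev]; ring
    rw [this]; exact Ideal.sub_mem _ hql hsumo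
  rcases Nat.eq_zero_or_pos q.natDegree with h0 | hpos
  · rw [h0, pow_zero] at hpow
    exact absurd (p.eq_top_of_isUnit_mem hpow isUnit_one) hp.ne_top
  · exact hp.mem_of_pow_mem _ hpow


lemma aux_colon_eq_ann {M : Type*} [AddCommGroup M] [Module R M] (x : M) :
    (⊥ : Submodule R M).colon {x} = (R ∙ x).annihilator := by
  ext r; simp [Submodule.mem_colon_singleton, Submodule.mem_annihilator_span_singleton]

lemma aux_ass_subset [IsNoetherianRing R] {M : Type*} [AddCommGroup M] [Module R M] (N' : Submodule R M) :
    associatedPrimes R M ⊆ associatedPrimes R N' ∪ associatedPrimes R (M ⧸ N') := by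
  rintro p hpa
  obtain ⟨hp, x, hx⟩ := isAssociatedPrime_iff.mp hpa
  rw [aux_colon_eq_ann] at hx
  by_cases h : ∀ a : R, a • x ∈ N' → a • x = 0
  · right
    refine isAssociatedPrime_iff.mpr ⟨hp, Submodule.Quotient.mk x, ?_⟩
    rw [aux_colon_eq_ann]
    ext r
    rw [Submodule.mem_annihilator_span_singleton, ← Submodule.Quotient.mk_smul,
      Submodule.Quotient.mk_eq_zero]
    constructor
    · intro hr
      have : r • x = 0 := (Submodule.mem_annihilator_span_singleton x r).mp (hx ▸ hr)
      rw [this]; exact N'.zero_mem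
    · intro hr
      have : r • x = 0 := h r hr
      rw [hx, Submodule.mem_annihilator_span_singleton]; exact this
  · push_neg at h
    obtain ⟨a, haN, ha0⟩ := h
    left
    refine isAssociatedPrime_iff.mpr ⟨hp, ⟨a • x, haN⟩, ?_⟩
    rw [aux_colon_eq_ann]
    ext r
    rw [Submodule.mem_annihilator_span_singleton]
    constructor
    · intro hr
      have hrx : r • x = 0 := (Submodule.mem_annihilator_span_singleton x r).mp (hx ▸ hr)
      ext
      simp [smul_comm r a, hrx]
    · intro hr
      have : r • (a • x) = 0 := by
        have := congrArg (Subtype.val) hr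
        simpa using this
      rw [smul_smul] at this
      have hra : r * a ∈ p := by
        rw [hx, Submodule.mem_annihilator_span_singleton]; exact this
      rcases hp.mem_or_mem hra with h1 | h2
      · exact h1
      · exfalso
        apply ha0
        have : a • x = 0 := (Submodule.mem_annihilator_span_singleton x a).mp (hx ▸ h2)
        exact this



lemma aux_ass_finite [IsNoetherianRing R] {M : Type*} [AddCommGroup M] [Module R M]
    [Module.Finite R M] : (associatedPrimes R M).Finite := by
  haveI : IsNoetherian R M := isNoetherian_of_isNoetherianRing_of_finite R M
  obtain ⟨N₀, hN₀mem, hmax⟩ := set_has_maximal_iff_noetherian.mpr (inferInstance : IsNoetherian R M)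
      {N' : Submodule R M | (associatedPrimes R N').Finite}
      ⟨⊥, by
        have : Subsingleton (⊥ : Submodule R M) := inferInstance
        simp only [Set.mem_setOf_eq, associatedPrimes.eq_empty_of_subsingleton]
        exact Set.finite_empty⟩
  by_cases hN : N₀ = ⊤
  · have heq := LinearEquiv.AssociatedPrimes.eq (Submodule.topEquiv (R := R) (M := M))
    rw [hN] at hN₀mem
    simpa [heq] using hN₀mem
  · exfalso
    haveI : Nontrivial (M ⧸ N₀) :=
      Submodule.Quotient.nontrivial_iff.mpr hN
    obtain ⟨p, hpa⟩ := associatedPrimes.nonempty R (M ⧸ N₀)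
    obtain ⟨hpp, y, hy⟩ := isAssociatedPrime_iff.mp hpa
    rw [aux_colon_eq_ann] at hy
    obtain ⟨x, rfl⟩ := Submodule.Quotient.mk_surjective _ y
    have hxN : x ∉ N₀ := by
      intro h
      have h0 : (Submodule.Quotient.mk x : M ⧸ N₀) = 0 := (Submodule.Quotient.mk_eq_zero _).mpr h
      rw [h0] at hy
      apply hpp.ne_top
      rw [hy, Submodule.annihilator_eq_top_iff, Submodule.span_singleton_eq_bot]
    set N₁ := N₀ ⊔ (R ∙ x) with hN₁
    have hxN₁ : x ∈ N₁ := (le_sup_right : (R ∙ x) ≤ N₁) (Submodule.mem_span_singleton_self x)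
    have hle : N₀ ≤ N₁ := le_sup_left
    have hlt : N₀ < N₁ := lt_of_le_of_ne hle (by
      intro hEq
      exact hxN (hEq ▸ hxN₁))
    apply hmax N₁ ?_ hlt
    -- show Ass N₁ finite
    set N₀' : Submodule R N₁ := Submodule.comap N₁.subtype N₀ with hN₀'
    have h1 : associatedPrimes R N₀' = associatedPrimes R N₀ :=
      LinearEquiv.AssociatedPrimes.eq (Submodule.comapSubtypeEquivOfLe hle)
    -- the quotient is iso to R ⧸ p
    set g : R →ₗ[R] (N₁ ⧸ N₀') := N₀'.mkQ ∘ₗ LinearMap.toSpanSingleton R N₁ ⟨x, hxN₁⟩ with hg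
    have hker : LinearMap.ker g = p := by
      ext r
      simp only [hg, LinearMap.mem_ker, LinearMap.comp_apply, Submodule.mkQ_apply,
        LinearMap.toSpanSingleton_apply, Submodule.Quotient.mk_eq_zero]
      rw [hN₀', Submodule.mem_comap]
      have : (N₁.subtype) (r • ⟨x, hxN₁⟩) = r • x := rfl
      rw [this, hy, Submodule.mem_annihilator_span_singleton, ← Submodule.Quotient.mk_smul,
        Submodule.Quotient.mk_eq_zero]
    have hsurj : Function.Surjective g := by
      rw [← LinearMap.range_eq_top, hg, LinearMap.range_comp, ← LinearMap.span_singleton_eq_range,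
        Submodule.map_mkQ_eq_top]
      rw [eq_top_iff]
      rintro ⟨n, hn⟩ -
      obtain ⟨n₀, hn₀, m, hm, rfl⟩ := Submodule.mem_sup.mp hn
      obtain ⟨r, rfl⟩ := Submodule.mem_span_singleton.mp hm
      refine Submodule.mem_sup.mpr ⟨⟨n₀, hle hn₀⟩, ?_, r • ⟨x, hxN₁⟩,
        Submodule.smul_mem _ r (Submodule.mem_span_singleton_self _), ?_⟩
      · exact hn₀
      · ext; rfl
    have e : (R ⧸ p) ≃ₗ[R] (N₁ ⧸ N₀') :=
      (Submodule.quotEquivOfEq p (LinearMap.ker g) hker.symm).trans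
        (g.quotKerEquivOfSurjective hsurj)
    have h2 : associatedPrimes R (N₁ ⧸ N₀') = {p} := by
      rw [← LinearEquiv.AssociatedPrimes.eq e,
        associatedPrimes.eq_singleton_of_isPrimary hpp.isPrimary, hpp.radical]
    have h3 := aux_ass_subset N₀'
    rw [h1, h2] at h3
    exact Set.Finite.subset (Set.Finite.union hN₀mem (Set.finite_singleton p)) h3




set_option maxHeartbeats 1000000 in
lemma aux_exists_hom [IsNoetherianRing R] {M N : Type*} [AddCommGroup M] [Module R M]
    [AddCommGroup N] [Module R N] [Module.Finite R M]
    {p : Ideal R} (hass : IsAssociatedPrime p N) (hle : Module.annihilator R M ≤ p) :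
    ∃ f : M →ₗ[R] N, f ≠ 0 := by
  classical
  obtain ⟨hp, x, hx⟩ := isAssociatedPrime_iff.mp hass
  rw [aux_colon_eq_ann] at hx
  haveI : p.IsPrime := hp
  haveI : Nontrivial (R ⧸ p) := Ideal.Quotient.nontrivial_iff.mpr hp.ne_top
  set D := R ⧸ p with hD
  set K := FractionRing D with hK
  set M₂ := M ⧸ (p • ⊤ : Submodule R M) with hM₂
  set π : M →ₗ[R] M₂ := (p • (⊤ : Submodule R M)).mkQ with hπ
  -- generators of M
  obtain ⟨sM, hsM⟩ := Module.Finite.fg_top (R := R) (M := M)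
  have hsM₂ : Submodule.span D (π '' (sM : Set M)) = ⊤ := by
    rw [← Submodule.restrictScalars_eq_top_iff (S := R), eq_top_iff]
    refine le_trans ?_ (Submodule.span_le_restrictScalars R D _)
    rw [← Submodule.map_span, hsM, Submodule.map_top, LinearMap.range_eq_top.mpr
      (Submodule.Quotient.mk_surjective _)]
  -- Step A : the vector space K ⊗[D] M₂ is nontrivial
  have hVnt : Nontrivial (K ⊗[D] M₂) := by
    by_contra hV
    rw [not_nontrivial_iff_subsingleton] at hV
    have hbc : IsBaseChange K (LocalizedModule.mkLinearMap (nonZeroDivisors D) M₂) :=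
      IsLocalizedModule.isBaseChange (nonZeroDivisors D) K _
    haveI : Subsingleton (LocalizedModule (nonZeroDivisors D) M₂) :=
      (hbc.equiv.toEquiv.symm).subsingleton
    have htors := LocalizedModule.subsingleton_iff.mp this
    -- kill each generator, take product
    choose dfun hdmem hdkill using fun m : M₂ => htors m
    set d : D := ∏ m ∈ sM.image π, dfun m with hd
    have hdm : d ∈ nonZeroDivisors D := prod_mem fun m _ => hdmem m
    have hdkills : ∀ m ∈ sM.image π, d • m = 0 := by
      intro m hm
      rw [hd, ← Finset.prod_erase_mul _ _ hm, mul_smul, hdkill m, smul_zero]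
    -- d kills all of M₂
    have hdall : ∀ m : M₂, d • m = 0 := by
      have : (Submodule.span D (π '' (sM : Set M))) ≤
          LinearMap.ker (LinearMap.lsmul D M₂ d) := by
        rw [Submodule.span_le]
        rintro _ ⟨m, hm, rfl⟩
        exact hdkills _ (Finset.mem_image_of_mem π hm)
      rw [hsM₂] at this
      intro m
      simpa using LinearMap.mem_ker.mp (this Submodule.mem_top)
    obtain ⟨s', hs'⟩ := Ideal.Quotient.mk_surjective d
    have hsp : s' ∈ p := by
      apply aux_det_trick hp hle
      intro m
      have h3 : π (s' • m) = (0 : M₂) := by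
        rw [hπ, Submodule.mkQ_apply, ← Module.Quotient.mk_smul_mk, hs']
        exact hdall _
      rwa [hπ, Submodule.mkQ_apply, Submodule.Quotient.mk_eq_zero] at h3
    have hd0 : d = 0 := by rw [← hs', Ideal.Quotient.eq_zero_iff_mem]; exact hsp
    rw [hd0] at hdm
    exact (nonZeroDivisors.ne_zero hdm) rfl
  -- Step B : construct a nonzero functional and clear denominators
  set bV := Module.Basis.ofVectorSpace K (K ⊗[D] M₂) with hbV
  obtain ⟨i⟩ := bV.index_nonempty
  set lam : (K ⊗[D] M₂) →ₗ[K] K := bV.coord i with hlam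
  set g : M₂ →ₗ[D] K := (lam.restrictScalars D).comp (TensorProduct.mk D K M₂ 1) with hg
  have hgspan : ∃ m : M₂, g m ≠ 0 := by
    by_contra hg0
    push_neg at hg0
    have hlz : ∀ v, (lam.restrictScalars D) v = 0 := by
      intro v
      have hsp2 : v ∈ Submodule.span D {t : K ⊗[D] M₂ | ∃ m n, m ⊗ₜ n = t} := by
        rw [TensorProduct.span_tmul_eq_top]; trivial
      refine Submodule.span_induction ?_ ?_ ?_ ?_ hsp2
      · rintro _ ⟨k, m, rfl⟩
        have hkm : k ⊗ₜ[D] m = k • ((1 : K) ⊗ₜ[D] m) := by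
          rw [TensorProduct.smul_tmul', smul_eq_mul, mul_one]
        have : (lam.restrictScalars D) (k ⊗ₜ[D] m) = k • lam ((1:K) ⊗ₜ[D] m) := by
          rw [hkm]; exact lam.map_smul k _
        rw [this]
        have hgm : lam ((1:K) ⊗ₜ[D] m) = g m := rfl
        rw [hgm, hg0 m, smul_zero]
      · simp
      · intro u v _ _ hu hv; rw [map_add, hu, hv, add_zero]
      · intro a u _ hu; rw [map_smul, hu, smul_zero]
    have h1 : lam (bV i) = 1 := by simp [hlam]
    have h2 : lam (bV i) = 0 := hlz (bV i)
    rw [h1] at h2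
    exact one_ne_zero h2
  obtain ⟨m₀, hm₀⟩ := hgspan
  obtain ⟨b, hb⟩ := IsLocalization.exist_integer_multiples (nonZeroDivisors D) (sM.image π) g
  set h : M₂ →ₗ[D] K := (b : D) • g with hh
  have hrange : ∀ m : M₂, h m ∈ LinearMap.range (Algebra.linearMap D K) := by
    have hsub : Submodule.span D (π '' (sM : Set M)) ≤
        Submodule.comap h (LinearMap.range (Algebra.linearMap D K)) := by
      rw [Submodule.span_le]
      rintro _ ⟨m, hm, rfl⟩
      obtain ⟨dd, hdd⟩ := hb (π m) (Finset.mem_image_of_mem π hm)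
      exact ⟨dd, by simpa [hh] using hdd⟩
    rw [hsM₂] at hsub
    intro m; exact hsub Submodule.mem_top
  have hinj : Function.Injective (Algebra.linearMap D K) :=
    IsFractionRing.injective D K
  set e2 : _ ≃ₗ[D] D := (LinearEquiv.ofInjective (Algebra.linearMap D K) hinj).symm with he2
  set ψ : M₂ →ₗ[D] D := e2.toLinearMap.comp
      (h.codRestrict (LinearMap.range (Algebra.linearMap D K)) hrange) with hψ
  have hψm₀ : ψ m₀ ≠ 0 := by
    intro h0
    have hc0 : h.codRestrict (LinearMap.range (Algebra.linearMap D K)) hrange m₀ = 0 := by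
      have := congrArg e2.symm h0
      simpa [hψ] using this
    have hh0 : h m₀ = 0 := congrArg Subtype.val hc0
    have hbg : ((b : D)) • g m₀ = 0 := by simpa [hh] using hh0
    rw [Algebra.smul_def] at hbg
    rcases mul_eq_zero.mp hbg with h1 | h2
    · exact IsFractionRing.to_map_ne_zero_of_mem_nonZeroDivisors b.2 h1
    · exact hm₀ h2
  set ψR : M₂ →ₗ[R] D := ψ.restrictScalars R with hψR
  have hkerφ : p ≤ LinearMap.ker (LinearMap.toSpanSingleton R N x) := by
    intro r hr
    rw [LinearMap.mem_ker, LinearMap.toSpanSingleton_apply]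
    exact (Submodule.mem_annihilator_span_singleton x r).mp (hx ▸ hr)
  set φ : (R ⧸ p) →ₗ[R] N := p.liftQ (LinearMap.toSpanSingleton R N x) hkerφ with hφ
  have hφinj : Function.Injective φ := by
    rw [← LinearMap.ker_eq_bot, hφ, Submodule.ker_liftQ_eq_bot]
    intro r hr
    rw [LinearMap.mem_ker, LinearMap.toSpanSingleton_apply] at hr
    rw [hx]
    exact (Submodule.mem_annihilator_span_singleton x r).mpr hr
  refine ⟨φ.comp (ψR.comp π), ?_⟩
  intro hf0
  obtain ⟨m₀', hm₀'⟩ := Submodule.Quotient.mk_surjective _ m₀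
  have hz : φ (ψR (π m₀')) = 0 := by
    have := LinearMap.congr_fun hf0 m₀'
    simpa using this
  have hπm : π m₀' = m₀ := hm₀'
  rw [hπm] at hz
  exact hψm₀ (hφinj (hz.trans (map_zero φ).symm))


end AuxHomVanish

open TensorProduct

/-- Hom-vanishing criterion: for finitely generated modules `M, N` over a commutative
Noetherian ring with `M ⊗_R N ≠ 0`, one has `Hom_R(M,N) = 0` iff `Ann_R(M)` contains an
`N`-regular element. -/
theorem hom_eq_zero_iff_annihilator_has_regular {R : Type*} [CommRing R] [IsNoetherianRing R]
    (M N : Type*) [AddCommGroup M] [Module R M] [AddCommGroup N] [Module R N]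
    [Module.Finite R M] [Module.Finite R N] (htensor : Nontrivial (M ⊗[R] N)) :
    (∀ f : M →ₗ[R] N, f = 0) ↔ ∃ r ∈ Module.annihilator R M, IsSMulRegular N r := by
  constructor
  · intro hhom
    have hfin : (associatedPrimes R N).Finite := aux_ass_finite
    have hnot : ∀ p ∈ associatedPrimes R N, ¬ (Module.annihilator R M ≤ p) := by
      intro p hpmem hle
      obtain ⟨f, hf⟩ := aux_exists_hom hpmem hle
      exact hf (hhom f)
    have hsub : ¬ ((Module.annihilator R M : Set R) ⊆
        ⋃ p ∈ associatedPrimes R N, (p : Set R)) := by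
      intro hsub
      have heq : (⋃ p ∈ associatedPrimes R N, (p : Set R)) =
          ⋃ p ∈ ((hfin.toFinset : Finset (Ideal R)) : Set (Ideal R)), (p : Set R) := by
        simp [Set.Finite.mem_toFinset]
      rw [heq] at hsub
      rw [Ideal.subset_union_prime (f := fun p : Ideal R => p) ⊥ ⊥
        (fun p hps _ _ => (hfin.mem_toFinset.mp hps).isPrime)] at hsub
      obtain ⟨p, hps, hle⟩ := hsub
      exact hnot p (hfin.mem_toFinset.mp hps) hle
    obtain ⟨r, hrI, hr⟩ := Set.not_subset.mp hsub
    refine ⟨r, hrI, ?_⟩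
    have hcompl := biUnion_associatedPrimes_eq_compl_regular R N
    rw [hcompl] at hr
    simpa using hr
  · rintro ⟨r, hr, hreg⟩ f
    ext m
    have h1 : r • f m = 0 := by
      rw [← map_smul, Module.mem_annihilator.mp hr m, map_zero]
    apply hreg
    simpa using h1
end

section
/- Let R be a commutative Artinian local ring and M ⊊ X finitely generated R-modules with M ≠ 0. If M is a trace module in X (M = Tr_X(M)), then Ext^1_R(M,M) ≠ 0. -/
open CategoryTheory

lemma aux_exists_hom_ne_zero {R : Type} [CommRing R] [IsArtinianRing R] [IsLocalRing R]
    (A B : Type) [AddCommGroup A] [Module R A] [AddCommGroup B] [Module R B]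
    [Nontrivial A] [Nontrivial B] :
    ∃ f : A →ₗ[R] B, f ≠ 0 := by
  classical
  set 𝔪 := IsLocalRing.maximalIdeal R with h𝔪
  obtain ⟨n, hn⟩ : IsNilpotent 𝔪 := by
    have := IsArtinianRing.isNilpotent_jacobson_bot (R := R)
    rwa [IsLocalRing.jacobson_eq_maximalIdeal (⊥ : Ideal R) bot_ne_top] at this
  -- powers of 𝔪 kill any module eventually
  have hkill : ∀ (C : Type) [AddCommGroup C] [inst : Module R C],
      𝔪 ^ n • (⊤ : Submodule R C) = ⊥ := by
    intro C _ _
    rw [hn]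
    exact Submodule.bot_smul _
  -- socle element of B
  have hB : ∃ j, 𝔪 ^ j • (⊤ : Submodule R B) = ⊥ := ⟨n, hkill B⟩
  set m := Nat.find hB with hm
  have hmspec : 𝔪 ^ m • (⊤ : Submodule R B) = ⊥ := Nat.find_spec hB
  have hm0 : m ≠ 0 := by
    intro h
    rw [h, pow_zero, Ideal.one_eq_top, Submodule.top_smul] at hmspec
    obtain ⟨b, hb⟩ := exists_ne (0 : B)
    have : b ∈ (⊥ : Submodule R B) := hmspec ▸ Submodule.mem_top
    exact hb (by simpa using this)
  have hprev : 𝔪 ^ (m - 1) • (⊤ : Submodule R B) ≠ ⊥ :=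
    Nat.find_min hB (Nat.sub_lt (Nat.pos_of_ne_zero hm0) one_pos)
  obtain ⟨x, hxmem, hx0⟩ := Submodule.exists_mem_ne_zero_of_ne_bot hprev
  have hxkill : ∀ a ∈ 𝔪, a • x = 0 := by
    intro a ha
    have : a • x ∈ 𝔪 ^ m • (⊤ : Submodule R B) := by
      have : a • x ∈ 𝔪 • (𝔪 ^ (m - 1) • (⊤ : Submodule R B)) :=
        Submodule.smul_mem_smul ha hxmem
      rwa [← Submodule.smul_assoc, smul_eq_mul, ← pow_succ', Nat.sub_add_cancel
        (Nat.one_le_iff_ne_zero.mpr hm0)] at this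
    rw [hmspec] at this
    simpa using this
  -- the map k → B
  let ι : (R ⧸ 𝔪) →ₗ[R] B := Submodule.liftQ 𝔪 (LinearMap.toSpanSingleton R B x)
    (fun a ha => by simpa [LinearMap.mem_ker] using hxkill a ha)
  have hι1 : ∀ r : R, ι (Submodule.Quotient.mk r) = r • x := by
    intro r
    show Submodule.liftQ _ _ _ (Submodule.Quotient.mk r) = r • x
    rw [Submodule.liftQ_apply, LinearMap.toSpanSingleton_apply]
  have hιinj : ∀ c, ι c = 0 → c = 0 := by
    intro c hc
    obtain ⟨r, rfl⟩ := Submodule.Quotient.mk_surjective _ c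
    rw [hι1] at hc
    by_contra hne
    have hr : r ∉ 𝔪 := fun hmem =>
      hne ((Submodule.Quotient.mk_eq_zero 𝔪).mpr hmem)
    have hu : IsUnit r := by
      by_contra hnu
      exact hr (IsLocalRing.mem_maximalIdeal r |>.mpr hnu)
    obtain ⟨u, rfl⟩ := hu
    apply hx0
    calc x = ((↑u⁻¹ : R) * (u : R)) • x := by simp
    _ = (↑u⁻¹ : R) • ((u : R) • x) := by rw [mul_smul]
    _ = 0 := by rw [hc, smul_zero]
  -- Nakayama: A ⧸ 𝔪 • ⊤ is nontrivial
  have hAne : (𝔪 • ⊤ : Submodule R A) ≠ ⊤ := by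
    intro h
    have hpow : ∀ j : ℕ, 𝔪 ^ j • (⊤ : Submodule R A) = ⊤ := by
      intro j
      induction j with
      | zero => rw [pow_zero, Ideal.one_eq_top, Submodule.top_smul]
      | succ j ih =>
        rw [pow_succ', ← smul_eq_mul, Submodule.smul_assoc, ih, h]
    have := hpow n
    rw [hkill A] at this
    obtain ⟨b, hb⟩ := exists_ne (0 : A)
    have hbm : b ∈ (⊥ : Submodule R A) := this ▸ Submodule.mem_top
    exact hb (by simpa using hbm)
  have hVnt : Nontrivial (A ⧸ (𝔪 • ⊤ : Submodule R A)) :=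
    Submodule.Quotient.nontrivial_iff.mpr (lt_top_iff_ne_top.mpr hAne).ne
  -- residue field and vector space structure
  haveI : 𝔪.IsMaximal := IsLocalRing.maximalIdeal.isMaximal R
  letI : Field (R ⧸ 𝔪) := Ideal.Quotient.field 𝔪
  obtain ⟨v, hv⟩ := exists_ne (0 : A ⧸ (𝔪 • ⊤ : Submodule R A))
  obtain ⟨g, hg, -⟩ := Submodule.exists_dual_map_eq_bot_of_notMem
    (R := R ⧸ 𝔪) (p := (⊥ : Submodule (R ⧸ 𝔪) (A ⧸ (𝔪 • ⊤ : Submodule R A))))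
    (by simpa using hv) inferInstance
  let g' : (A ⧸ (𝔪 • ⊤ : Submodule R A)) →ₗ[R] (R ⧸ 𝔪) := g.restrictScalars R
  refine ⟨(ι.comp g').comp (Submodule.mkQ _), ?_⟩
  intro hzero
  obtain ⟨a, ha⟩ := Submodule.Quotient.mk_surjective _ v
  have : ι (g' v) = 0 := by
    have := LinearMap.congr_fun hzero a
    simpa [ha, g'] using this
  exact hg (hιinj _ this)

/-- Over a commutative Artinian local ring, a nonzero proper trace submodule `M` of a
finitely generated module `X` satisfies `Ext¹_R(M,M) ≠ 0`. -/
theorem ext_ne_zero_of_trace_artinian {R : Type} [CommRing R] [IsArtinianRing R]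
    [IsLocalRing R] (X : Type) [AddCommGroup X] [Module R X] [Module.Finite R X]
    (M : Submodule R X) (hne : M ≠ ⊥) (hproper : M ≠ ⊤)
    (htrace : ∀ α : M →ₗ[R] X, LinearMap.range α ≤ M) :
    ¬ Subsingleton (((Ext R (ModuleCat R) 1).obj
      (Opposite.op (ModuleCat.of R M))).obj (ModuleCat.of R M)) := by
  intro hss
  haveI : Nontrivial ↥M := Submodule.nontrivial_iff_ne_bot.mpr hne
  haveI : Nontrivial (X ⧸ M) :=
    Submodule.Quotient.nontrivial_iff.mpr (lt_top_iff_ne_top.mpr hproper).ne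
  obtain ⟨f0, hf0⟩ := aux_exists_hom_ne_zero (R := R) (↥M) (X ⧸ M)
  classical
  set Mc : ModuleCat R := ModuleCat.of R M with hMc
  have inst : HasProjectiveResolution Mc := inferInstance
  obtain ⟨P⟩ := inst.out
  let K := P.complex.linearYonedaObj R Mc
  have hss2 : Subsingleton (K.homology 1) :=
    ((P.isoExt (R := R) 1 Mc).toLinearEquiv.subsingleton_congr).mp hss
  have hz : Limits.IsZero ((K : CochainComplex (ModuleCat R) ℕ).homology 1) :=
    ModuleCat.isZero_of_subsingleton _
  have hexK : K.ExactAt 1 := (HomologicalComplex.exactAt_iff_isZero_homology K 1).mpr hz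
  rw [K.exactAt_iff' 0 1 2 (by simp) (by simp)] at hexK
  rw [ShortComplex.moduleCat_exact_iff] at hexK
  have hex : ∀ e : P.complex.X 1 ⟶ Mc, P.complex.d 2 1 ≫ e = 0 →
      ∃ s : P.complex.X 0 ⟶ Mc, P.complex.d 1 0 ≫ s = e := by
    intro e he
    obtain ⟨s, hs⟩ := hexK e he
    exact ⟨s, hs⟩
  -- objects and basic morphisms
  let Xc : ModuleCat R := ModuleCat.of R X
  let Nc : ModuleCat R := ModuleCat.of R (X ⧸ M)
  let ic : Mc ⟶ Xc := ModuleCat.ofHom M.subtype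
  let pc : Xc ⟶ Nc := ModuleCat.ofHom M.mkQ
  let fc : Mc ⟶ Nc := ModuleCat.ofHom f0
  have hic : Mono ic := (ModuleCat.mono_iff_injective _).mpr (Submodule.injective_subtype M)
  have hpc : Epi pc := (ModuleCat.epi_iff_surjective _).mpr (Submodule.mkQ_surjective M)
  have hicpc : ic ≫ pc = 0 := by
    apply ModuleCat.hom_ext
    apply LinearMap.ext
    intro m
    exact (Submodule.Quotient.mk_eq_zero M).mpr m.2
  -- the augmentation
  let π₀ : P.complex.X 0 ⟶ Mc := P.π.f 0
  have hπ₀ : Epi π₀ := inferInstanceAs (Epi (P.π.f 0))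
  have hd10π₀ : P.complex.d 1 0 ≫ π₀ = 0 := P.complex_d_comp_π_f_zero
  -- lift f0 ∘ π₀ through pc
  let h : P.complex.X 0 ⟶ Xc := Projective.factorThru (π₀ ≫ fc) pc
  have hh : h ≫ pc = π₀ ≫ fc := Projective.factorThru_comp _ _
  let h1 : P.complex.X 1 ⟶ Xc := P.complex.d 1 0 ≫ h
  have hh1 : h1 ≫ pc = 0 := by
    show (P.complex.d 1 0 ≫ h) ≫ pc = 0
    rw [Category.assoc, hh, ← Category.assoc, hd10π₀, Limits.zero_comp]
  -- h1 lands in M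
  have hmem : ∀ y : P.complex.X 1, (h1.hom : P.complex.X 1 →ₗ[R] X) y ∈ M := by
    intro y
    have := LinearMap.congr_fun (congrArg ModuleCat.Hom.hom hh1) y
    exact (Submodule.Quotient.mk_eq_zero M).mp this
  let e : P.complex.X 1 ⟶ Mc :=
    ModuleCat.ofHom (LinearMap.codRestrict M (h1.hom : P.complex.X 1 →ₗ[R] X) hmem)
  have heic : e ≫ ic = h1 := by
    apply ModuleCat.hom_ext; apply LinearMap.ext; intro y; rfl
  have hecycle : P.complex.d 2 1 ≫ e = 0 := by
    rw [← cancel_mono ic, Category.assoc, heic, Limits.zero_comp]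
    show P.complex.d 2 1 ≫ P.complex.d 1 0 ≫ h = 0
    rw [← Category.assoc, P.complex.d_comp_d, Limits.zero_comp]
  obtain ⟨s, hs⟩ := hex e hecycle
  let h' : P.complex.X 0 ⟶ Xc := h - s ≫ ic
  have hd10h' : P.complex.d 1 0 ≫ h' = 0 := by
    show P.complex.d 1 0 ≫ (h - s ≫ ic) = 0
    rw [Preadditive.comp_sub, ← Category.assoc, hs, heic]
    simp [h1]
  obtain ⟨t, ht⟩ := Limits.CokernelCofork.IsColimit.desc' P.isColimitCokernelCofork h' hd10h'
  have htt : π₀ ≫ t = h' := ht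
  -- the trace condition kills t
  have htpc : t ≫ pc = 0 := by
    apply ModuleCat.hom_ext
    apply LinearMap.ext
    intro m
    exact (Submodule.Quotient.mk_eq_zero M).mpr (htrace (t.hom : ↥M →ₗ[R] X) ⟨m, rfl⟩)
  have : π₀ ≫ fc = 0 := by
    rw [← hh]
    have : h = h' + s ≫ ic := by simp [h']
    rw [this, Preadditive.add_comp, Category.assoc, hicpc, Limits.comp_zero, add_zero,
      ← ht, Category.assoc, htpc, Limits.comp_zero]
  have hfc : fc = 0 := by
    rwa [← cancel_epi π₀, Limits.comp_zero]
  exact hf0 (congrArg ModuleCat.Hom.hom hfc)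
end

section
/- Let R be a commutative Noetherian local ring that is Artinian and Gorenstein, and let I ⊊ R be a nonzero proper ideal. Then Ext^1_R(I,I) ≠ 0, i.e., I is not rigid. -/
open CategoryTheory

noncomputable section

lemma lift_of_ext1_subsingleton {R : Type} [CommRing R] (X Y B C : ModuleCat R)
    (hsub : Subsingleton (((Ext R (ModuleCat R) 1).obj (Opposite.op X)).obj Y))
    (ι : Y ⟶ B) (π : B ⟶ C) (hι : Function.Injective ι)
    (hex : ∀ b, π b = 0 → ∃ y, ι y = b) (hcomp : ∀ y, π (ι y) = 0)
    [Epi π] (f : X ⟶ C) : ∃ g : X ⟶ B, ∀ x, π (g x) = f x := by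
  classical
  let P : ProjectiveResolution X := ProjectiveResolution.of X
  set K := P.complex.linearYonedaObj R Y with hK
  -- homology at 1 is zero
  have hiso : (((Ext R (ModuleCat R) 1).obj (Opposite.op X)).obj Y) ≃ₗ[R] (K.homology 1) := (P.isoExt 1 Y).toLinearEquiv
  have hsub2 : Subsingleton (K.homology 1) := hiso.toEquiv.symm.subsingleton
  have hzero : Limits.IsZero (K.homology 1) := ModuleCat.isZero_of_subsingleton _
  have hexact : K.ExactAt 1 := (HomologicalComplex.exactAt_iff_isZero_homology K 1).2 hzero
  have hexact' := (HomologicalComplex.exactAt_iff' K 0 1 2 (by simp) (by simp)).1 hexact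
  rw [ShortComplex.moduleCat_exact_iff] at hexact'
  -- setup
  set ε : P.complex.X 0 ⟶ X := P.π.f 0 with hε
  have hεsurj : Function.Surjective ε := by
    rw [← ModuleCat.epi_iff_surjective]; exact (inferInstance : Epi (P.π.f 0))
  set g₀ : P.complex.X 0 ⟶ B := Projective.factorThru (ε ≫ f) π with hg₀
  have hfac : ∀ p, π (g₀ p) = f (ε p) := fun p =>
    by have := ConcreteCategory.congr_hom (Projective.factorThru_comp (ε ≫ f) π) p; exact this
  set c : P.complex.X 1 ⟶ B := P.complex.d 1 0 ≫ g₀ with hc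
  have hcmem : ∀ p, c p ∈ LinearMap.range ι.hom := by
    intro p
    have h1 : π (c p) = 0 := by
      have : f ((P.complex.d 1 0 ≫ ε) p) = f 0 := by
        rw [show P.complex.d 1 0 ≫ ε = 0 from P.complex_d_comp_π_f_zero]; rfl
      simpa [hc, hfac] using this
    obtain ⟨y, hy⟩ := hex _ h1
    exact ⟨y, hy⟩
  set E := LinearEquiv.ofInjective ι.hom hι with hE
  set c' : P.complex.X 1 ⟶ Y :=
    ModuleCat.ofHom (E.symm.toLinearMap ∘ₗ LinearMap.codRestrict (LinearMap.range ι.hom) c.hom hcmem) with hc'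
  have hιc' : ∀ p, ι (c' p) = c p := by
    intro p
    show ι.hom (E.symm ⟨c p, hcmem p⟩) = c p
    rw [hE, LinearEquiv.ofInjective_symm_apply]
  -- c' is a cocycle
  have hcocycle : K.d 1 2 c' = 0 := by
    show P.complex.d 2 1 ≫ c' = 0
    ext p
    apply hι
    show ι (c' (P.complex.d 2 1 p)) = ι 0
    rw [hιc', map_zero]
    show g₀ (P.complex.d 1 0 (P.complex.d 2 1 p)) = 0
    have h20 : P.complex.d 1 0 (P.complex.d 2 1 p) = 0 := by
      show (P.complex.d 2 1 ≫ P.complex.d 1 0) p = 0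
      rw [P.complex.d_comp_d]; rfl
    rw [h20, map_zero]
  -- use exactness to find h with d 1 0 ≫ h = c'
  obtain ⟨h₀, hh₀⟩ := hexact' c' hcocycle
  let h : P.complex.X 0 ⟶ Y := h₀
  have hh : P.complex.d 1 0 ≫ h = c' := hh₀
  have hh' : ∀ p, h (P.complex.d 1 0 p) = c' p := fun p => by have := ConcreteCategory.congr_hom hh p; exact this
  -- the corrected lift on P₀
  set g₀' : P.complex.X 0 ⟶ B := g₀ - (h ≫ ι) with hg₀'
  have hker : LinearMap.ker ε.hom ≤
      LinearMap.ker g₀'.hom := by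
    intro p hp
    have hp' : ε p = 0 := hp
    have hex0 := P.exact₀
    rw [ShortComplex.moduleCat_exact_iff] at hex0
    obtain ⟨q, hq⟩ := hex0 p hp'
    have hq' : P.complex.d 1 0 q = p := hq
    have : g₀' p = g₀ (P.complex.d 1 0 q) - ι (h (P.complex.d 1 0 q)) := by
      rw [hq']; rfl
    rw [LinearMap.mem_ker, this, hh', hιc']
    show c q - c q = 0
    simp
  set e := ε.hom.quotKerEquivOfSurjective hεsurj with he
  have hemk : ∀ p, e (Submodule.Quotient.mk p) = ε p := by
    intro p
    rfl
  refine ⟨ModuleCat.ofHom (((LinearMap.ker ε.hom).liftQ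
      g₀'.hom hker) ∘ₗ e.symm.toLinearMap), ?_⟩
  intro x
  obtain ⟨p, hp⟩ := hεsurj x
  have hsymm : e.symm x = Submodule.Quotient.mk p := by
    rw [LinearEquiv.symm_apply_eq, hemk, hp]
  show π (((LinearMap.ker ε.hom).liftQ _ hker) (e.symm x)) = f x
  rw [hsymm, Submodule.liftQ_apply]
  show π (g₀ p - ι (h p)) = f x
  rw [map_sub, hfac, hcomp, hp, sub_zero]
end

/-- In a commutative Noetherian local Artinian Gorenstein (self-injective) ring, a nonzero
proper ideal is not rigid: `Ext¹_R(I,I) ≠ 0`. -/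
theorem ideal_not_rigid_artinian_gorenstein {R : Type} [CommRing R] [IsNoetherianRing R]
    [IsLocalRing R] [IsArtinianRing R] (hinj : Module.Injective R R)
    (I : Ideal R) (hne : I ≠ ⊥) (hproper : I ≠ ⊤) :
    ¬ Subsingleton (((Ext R (ModuleCat R) 1).obj
      (Opposite.op (ModuleCat.of R I))).obj (ModuleCat.of R I)) := by
  intro hsub
  classical
  set m := IsLocalRing.maximalIdeal R with hm
  obtain ⟨n, hn⟩ : IsNilpotent m := by
    have := IsArtinianRing.isNilpotent_jacobson_bot (R := R)
    rwa [IsLocalRing.jacobson_eq_maximalIdeal ⊥ bot_ne_top] at this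
  -- a socle element y of R ⧸ I
  have hkex : ∃ k, m ^ k ≤ I := ⟨n, by rw [hn]; exact bot_le⟩
  set k := Nat.find hkex with hk
  have hkle : m ^ k ≤ I := Nat.find_spec hkex
  have hkpos : k ≠ 0 := by
    intro h0
    apply hproper
    apply top_le_iff.1
    simpa [h0] using hkle
  have hknot : ¬ (m ^ (k-1) ≤ I) := Nat.find_min hkex (by omega)
  obtain ⟨a, ha, haI⟩ := SetLike.not_le_iff_exists.1 hknot
  set y : R ⧸ I := Submodule.Quotient.mk a with hy
  have hy0 : y ≠ 0 := fun h0 => haI ((Submodule.Quotient.mk_eq_zero I).1 h0)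
  have hmy : ∀ s ∈ m, s • y = 0 := by
    intro s hs
    rw [hy, ← Submodule.Quotient.mk_smul, Submodule.Quotient.mk_eq_zero]
    have h1 : s • a ∈ m * m ^ (k-1) := by
      rw [smul_eq_mul]; exact Ideal.mul_mem_mul hs ha
    rw [← pow_succ'] at h1
    have hk1 : k - 1 + 1 = k := by omega
    rw [hk1] at h1
    exact hkle h1
  -- a maximal proper submodule W of I containing m • I
  have hnoeth : IsNoetherian R ↥I := inferInstance
  set mI : Submodule R ↥I := m • ⊤ with hmI
  have hmInetop : mI ≠ ⊤ := by
    intro htop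
    have hbot : (⊤ : Submodule R ↥I) = ⊥ :=
      Submodule.eq_bot_of_le_smul_of_le_jacobson_bot m ⊤ (IsNoetherian.noetherian ⊤)
        (le_of_eq htop.symm)
        (by rw [IsLocalRing.jacobson_eq_maximalIdeal ⊥ bot_ne_top])
    apply hne
    rw [eq_bot_iff]
    intro x hx
    have hmem : (⟨x, hx⟩ : ↥I) ∈ (⊤ : Submodule R ↥I) := trivial
    rw [hbot, Submodule.mem_bot] at hmem
    simpa [Submodule.mem_bot] using congrArg Subtype.val hmem
  obtain ⟨W, hWmem, hWmax⟩ := (set_has_maximal_iff_noetherian.2 hnoeth)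
      {p : Submodule R ↥I | p ≠ ⊤ ∧ mI ≤ p} ⟨mI, hmInetop, le_rfl⟩
  obtain ⟨hWne, hmIW⟩ := hWmem
  have hWcoatom : ∀ p : Submodule R ↥I, W < p → p = ⊤ := by
    intro p hp
    by_contra hpne
    exact hWmax p ⟨hpne, hmIW.trans hp.le⟩ hp
  have hWlt : W < (⊤ : Submodule R ↥I) := Ne.lt_top hWne
  obtain ⟨u, -, hu⟩ := SetLike.exists_of_lt hWlt
  set yu : ↥I ⧸ W := Submodule.Quotient.mk u with hyu
  have hyu0 : yu ≠ 0 := by simpa [hyu, Submodule.Quotient.mk_eq_zero] using hu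
  set ρ : R →ₗ[R] ↥I ⧸ W := LinearMap.toSpanSingleton R _ yu with hρ
  have hρsurj : Function.Surjective ρ := by
    intro z
    obtain ⟨v, rfl⟩ := Submodule.mkQ_surjective W z
    have hWtop : W ⊔ Submodule.span R {u} = ⊤ := by
      apply hWcoatom
      refine lt_of_le_of_ne le_sup_left ?_
      intro hWeq
      apply hu
      rw [hWeq]
      exact Submodule.mem_sup_right (Submodule.mem_span_singleton_self u)
    have hv : v ∈ W ⊔ Submodule.span R {u} := by rw [hWtop]; trivial
    obtain ⟨w, hw, s, hs, rfl⟩ := Submodule.mem_sup.1 hv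
    obtain ⟨r, rfl⟩ := Submodule.mem_span_singleton.1 hs
    refine ⟨r, ?_⟩
    show r • yu = Submodule.Quotient.mk (w + r • u)
    rw [Submodule.Quotient.mk_add, (Submodule.Quotient.mk_eq_zero W).2 hw, zero_add,
      Submodule.Quotient.mk_smul, hyu]
  have hkerρ : LinearMap.ker ρ = m := by
    have hle : m ≤ LinearMap.ker ρ := by
      intro s hs
      rw [LinearMap.mem_ker]
      show s • yu = 0
      rw [hyu, ← Submodule.Quotient.mk_smul, Submodule.Quotient.mk_eq_zero]
      exact hmIW (Submodule.smul_mem_smul hs trivial)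
    have hne' : LinearMap.ker ρ ≠ ⊤ := by
      intro htop
      apply hyu0
      have h1 : ρ 1 = 0 := by
        rw [← LinearMap.mem_ker, htop]; trivial
      simpa [hρ, LinearMap.toSpanSingleton_apply] using h1
    exact ((IsLocalRing.maximalIdeal.isMaximal R).eq_of_le hne' hle).symm
  set e2 := ρ.quotKerEquivOfSurjective hρsurj with he2
  set σ : ↥I →ₗ[R] R ⧸ (m : Ideal R) :=
    (Submodule.quotEquivOfEq _ _ hkerρ).toLinearMap ∘ₗ e2.symm.toLinearMap ∘ₗ W.mkQ with hσ
  have hσsurj : Function.Surjective σ := by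
    rw [hσ]
    simp only [LinearMap.coe_comp, LinearEquiv.coe_coe]
    exact (Submodule.quotEquivOfEq _ _ hkerρ).surjective.comp
      (e2.symm.surjective.comp (Submodule.mkQ_surjective W))
  have hψle : (m : Ideal R) ≤ LinearMap.ker (LinearMap.toSpanSingleton R (R ⧸ I) y) := by
    intro s hs
    rw [LinearMap.mem_ker, LinearMap.toSpanSingleton_apply]
    exact hmy s hs
  set ψ : (R ⧸ (m : Ideal R)) →ₗ[R] (R ⧸ I) :=
    Submodule.liftQ _ _ hψle with hψ
  obtain ⟨u', hu'⟩ := hσsurj (Submodule.Quotient.mk 1)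
  have hFu' : ψ (σ u') = y := by
    rw [hu', hψ, Submodule.liftQ_apply, LinearMap.toSpanSingleton_apply, one_smul]
  -- apply the lifting lemma
  set ιm : ModuleCat.of R ↥I ⟶ ModuleCat.of R R := ModuleCat.ofHom I.subtype with hιm
  set πm : ModuleCat.of R R ⟶ ModuleCat.of R (R ⧸ I) := ModuleCat.ofHom I.mkQ with hπm
  haveI : Epi πm := (ModuleCat.epi_iff_surjective _).2 (Submodule.mkQ_surjective I)
  obtain ⟨g, hg⟩ := lift_of_ext1_subsingleton (ModuleCat.of R ↥I) (ModuleCat.of R ↥I)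
    (ModuleCat.of R R) (ModuleCat.of R (R ⧸ I)) hsub ιm πm
    I.injective_subtype
    (fun b hb => ⟨⟨b, (Submodule.Quotient.mk_eq_zero I).1 hb⟩, rfl⟩)
    (fun z => (Submodule.Quotient.mk_eq_zero I).2 z.2)
    (ModuleCat.ofHom (ψ ∘ₗ σ))
  -- extend g : I →ₗ R to R →ₗ R using self-injectivity; it is multiplication by r
  obtain ⟨h, hh⟩ := hinj.out I.subtype I.injective_subtype g.hom
  set r := h 1 with hr
  have hgval : ∀ x : ↥I, g x = (x : R) * r := by
    intro x
    have hcalc : h ((x : R)) = (x : R) * r := by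
      calc h (x : R) = h ((x : R) • 1) := by rw [smul_eq_mul, mul_one]
      _ = (x : R) • h 1 := map_smul h _ _
      _ = (x : R) * r := by rw [smul_eq_mul, hr]
    exact (hh x).symm.trans hcalc
  have hzero : ψ (σ u') = 0 := by
    have h2 := hg u'
    have h3 : πm (g u') = ψ (σ u') := h2
    rw [← h3]
    show Submodule.Quotient.mk (g.hom u') = 0
    rw [Submodule.Quotient.mk_eq_zero, hgval u']
    exact I.mul_mem_right r u'.2
  rw [hFu'] at hzero
  exact hy0 hzero
end

section
/- Let R be a commutative Noetherian local Artinian Gorenstein ring and I an ideal of R with Ext^1_R(I,I) = 0. Then I = 0 or I = R; in particular I is a free R-module. -/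
open CategoryTheory


/-- Homological key: rigidity + self-injectivity implies every map `I → R/I` vanishes. -/
lemma hom_to_quotient_eq_zero {R : Type} [CommRing R] (hinj : Module.Injective R R)
    (I : Ideal R)
    (hrigid : Subsingleton (((Ext R (ModuleCat R) 1).obj
      (Opposite.op (ModuleCat.of R I))).obj (ModuleCat.of R I)))
    (g : I →ₗ[R] (R ⧸ I)) : g = 0 := by
  classical
  set M : ModuleCat R := ModuleCat.of R I with hM
  obtain ⟨P⟩ := (HasProjectiveResolution.out (Z := M))
  -- Ext vanishing transfers to homology of the Hom complex
  have hsub : Subsingleton ((P.complex.linearYonedaObj R M).homology 1) :=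
    (P.isoExt 1 M).toLinearEquiv.toEquiv.symm.subsingleton
  have hex : (P.complex.linearYonedaObj R M).ExactAt 1 := by
    rw [HomologicalComplex.exactAt_iff_isZero_homology]
    exact ModuleCat.isZero_of_subsingleton _
  have hex' := (ShortComplex.moduleCat_exact_iff _).1
    (((P.complex.linearYonedaObj R M).exactAt_iff' 0 1 2 (by simp) (by simp)).1 hex)
  -- names
  set π0 : P.complex.X 0 ⟶ M := P.π.f 0 with hπ0
  set NR : ModuleCat R := ModuleCat.of R R with hNR
  set N : ModuleCat R := ModuleCat.of R (R ⧸ I) with hN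
  set ι : M ⟶ NR := ModuleCat.ofHom (I.subtype) with hι
  set pr : NR ⟶ N := ModuleCat.ofHom (I.mkQ) with hpr
  set gC : M ⟶ N := ModuleCat.ofHom g with hgC
  have hprEpi : Epi pr := (ModuleCat.epi_iff_surjective _).2 (Submodule.mkQ_surjective I)
  have hιMono : Mono ι := (ModuleCat.mono_iff_injective ι).2 (Submodule.injective_subtype I)
  -- lift g ∘ π0 through pr
  set h : P.complex.X 0 ⟶ NR := Projective.factorThru (π0 ≫ gC) pr with hh0
  have hh : h ≫ pr = π0 ≫ gC := Projective.factorThru_comp _ _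
  have hd1π : P.complex.d 1 0 ≫ π0 = 0 := P.complex_d_comp_π_f_zero
  have hmem : ∀ x : P.complex.X 1, (P.complex.d 1 0 ≫ h) x ∈ I := by
    intro x
    have h1 : pr ((P.complex.d 1 0 ≫ h) x) = ((P.complex.d 1 0 ≫ h) ≫ pr) x := rfl
    have h2 : (P.complex.d 1 0 ≫ h) ≫ pr = 0 := by
      rw [Category.assoc, hh, ← Category.assoc, hd1π, Limits.zero_comp]
    rw [h2] at h1
    exact (Submodule.Quotient.mk_eq_zero I).1 h1
  set c : P.complex.X 1 ⟶ M :=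
    ModuleCat.ofHom (LinearMap.codRestrict (I.restrictScalars R)
      (P.complex.d 1 0 ≫ h).hom hmem) with hc
  have hcι : c ≫ ι = P.complex.d 1 0 ≫ h := rfl
  have hcoc : P.complex.d 2 1 ≫ c = 0 := by
    have : (P.complex.d 2 1 ≫ c) ≫ ι = 0 ≫ ι := by
      rw [Category.assoc, hcι, ← Category.assoc, P.complex.d_comp_d, Limits.zero_comp,
        Limits.zero_comp]
    exact (cancel_mono ι).1 this
  -- get b with d 1 0 ≫ b = c
  obtain ⟨(b : P.complex.X 0 ⟶ M), hb⟩ := hex' c (by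
    show ((P.complex.linearYonedaObj R M).d 1 2) c = 0
    rw [ChainComplex.linearYonedaObj_d]
    exact hcoc)
  have hb' : P.complex.d 1 0 ≫ b = c := by
    have h3 : ((P.complex.linearYonedaObj R M).d 0 1) b = c := hb
    rw [ChainComplex.linearYonedaObj_d] at h3
    exact h3
  -- t kills the image of d 1 0
  set t : P.complex.X 0 ⟶ NR := h - b ≫ ι with ht
  have hdt : P.complex.d 1 0 ≫ t = 0 := by
    rw [ht, Preadditive.comp_sub, ← Category.assoc, hb', hcι, sub_self]
  obtain ⟨(f : M ⟶ NR), hf⟩ := Limits.CokernelCofork.IsColimit.desc' P.isColimitCokernelCofork t hdt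
  have hfπ : π0 ≫ f = t := hf
  have hιpr : ι ≫ pr = 0 := by
    ext x
    exact (Submodule.Quotient.mk_eq_zero I).2 x.2
  have hπeq : π0 ≫ (f ≫ pr) = π0 ≫ gC := by
    rw [← Category.assoc, hfπ, ht, Preadditive.sub_comp, hh, Category.assoc, hιpr,
      Limits.comp_zero, sub_zero]
  have hfg : f ≫ pr = gC := by
    haveI : Epi π0 := inferInstanceAs (Epi (P.π.f 0))
    exact (cancel_epi π0).1 hπeq
  -- extend f along the inclusion I → R using injectivity of R
  obtain ⟨F, hF⟩ := hinj.out I.subtype (Submodule.injective_subtype I)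
    (f.hom : (I : Submodule R R) →ₗ[R] R)
  ext x
  show g x = 0
  have hx : g x = pr (f x) := (LinearMap.congr_fun (congrArg ModuleCat.Hom.hom hfg) x).symm
  have hx2 : f x = F ↑x := (hF x).symm
  have hFx : F ↑x = ↑x * F 1 := by
    conv_lhs => rw [show (x : R) = (x : R) • (1 : R) by simp]
    rw [map_smul, smul_eq_mul]
  rw [hx, hx2]
  show I.mkQ (F ↑x) = 0
  rw [hFx, Submodule.mkQ_apply, Submodule.Quotient.mk_eq_zero]
  exact I.mul_mem_right _ x.2

/-- In a local Artinian ring, if `I` is a nontrivial proper ideal, there is a nonzero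
`R`-linear map `I →ₗ[R] R ⧸ I`. -/
lemma exists_nonzero_hom {R : Type} [CommRing R] [IsNoetherianRing R]
    [IsLocalRing R] [IsArtinianRing R] (I : Ideal R) (hbot : I ≠ ⊥) (htop : I ≠ ⊤) :
    ∃ g : I →ₗ[R] (R ⧸ I), g ≠ 0 := by
  classical
  set m := IsLocalRing.maximalIdeal R with hm
  -- a "socle" element for R/I : y ∉ I with m * y ⊆ I
  obtain ⟨n, hn⟩ : ∃ n, m ^ n = ⊥ := by
    obtain ⟨n, hn⟩ := IsArtinianRing.isNilpotent_jacobson_bot (R := R)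
    exact ⟨n, by rwa [IsLocalRing.jacobson_eq_maximalIdeal ⊥ bot_ne_top] at hn⟩
  have hexk : ∃ k, m ^ k ≤ I := ⟨n, hn ▸ bot_le⟩
  set k := Nat.find hexk with hkdef
  have hk : m ^ k ≤ I := Nat.find_spec hexk
  have hk0 : k ≠ 0 := by
    intro h
    exact htop (top_le_iff.1 (by simpa [h] using hk))
  have hklt : ¬ m ^ (k - 1) ≤ I := Nat.find_min hexk (Nat.pred_lt hk0)
  obtain ⟨y, hy1, hy2⟩ := SetLike.not_le_iff_exists.1 hklt
  have hmy : ∀ c ∈ m, c * y ∈ I := by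
    intro c hc
    apply hk
    have : y * c ∈ m ^ (k - 1) * m := Ideal.mul_mem_mul hy1 hc
    rwa [← pow_succ, Nat.sub_add_cancel (Nat.one_le_iff_ne_zero.2 hk0), mul_comm] at this
  -- a maximal proper submodule of I containing m • I
  have hnt : Nontrivial I := Submodule.nontrivial_iff_ne_bot.2 hbot
  have hfg : (⊤ : Submodule R I).FG := IsNoetherian.noetherian _
  have hmItop : m • (⊤ : Submodule R I) ≠ ⊤ := by
    intro h
    have := Submodule.eq_bot_of_le_smul_of_le_jacobson_bot m (⊤ : Submodule R I) hfg
      h.ge (by rw [IsLocalRing.jacobson_eq_maximalIdeal ⊥ bot_ne_top])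
    exact top_ne_bot this
  obtain ⟨J, hJ, hJmax⟩ := set_has_maximal_iff_noetherian.2 (inferInstance : IsNoetherian R I)
    {J : Submodule R I | J ≠ ⊤ ∧ m • (⊤ : Submodule R I) ≤ J} ⟨m • ⊤, hmItop, le_rfl⟩
  obtain ⟨hJtop, hJm⟩ := hJ
  have hJle : ¬ (⊤ : Submodule R I) ≤ J := fun h => hJtop (top_le_iff.1 h)
  obtain ⟨x₀, -, hx₀⟩ := SetLike.not_le_iff_exists.1 hJle
  -- the map R → I/J , r ↦ r x₀
  set φ : R →ₗ[R] (I ⧸ J) := J.mkQ ∘ₗ LinearMap.toSpanSingleton R I x₀ with hφ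
  have hφ1 : φ 1 = Submodule.Quotient.mk x₀ := by simp [hφ]
  have hmker : m ≤ LinearMap.ker φ := by
    intro r hr
    have hmem : r • x₀ ∈ J := hJm (Submodule.smul_mem_smul hr Submodule.mem_top)
    rw [LinearMap.mem_ker, hφ, LinearMap.comp_apply, LinearMap.toSpanSingleton_apply,
      Submodule.mkQ_apply, Submodule.Quotient.mk_eq_zero]
    exact hmem
  have hkerne : LinearMap.ker φ ≠ ⊤ := by
    intro h
    have : φ 1 = 0 := by rw [← LinearMap.mem_ker, h]; trivial
    rw [hφ1, Submodule.Quotient.mk_eq_zero] at this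
    exact hx₀ this
  have hker : LinearMap.ker φ = m :=
    ((IsLocalRing.maximalIdeal.isMaximal R).eq_of_le hkerne hmker).symm
  -- φ is surjective
  have hsup : J ⊔ Submodule.span R {x₀} = ⊤ := by
    by_contra hne
    exact hJmax _ ⟨hne, le_trans hJm le_sup_left⟩
      (lt_of_le_of_ne le_sup_left (by
        intro h
        exact hx₀ (h ▸ (le_sup_right : Submodule.span R {x₀} ≤ J ⊔ Submodule.span R {x₀})
          (Submodule.mem_span_singleton_self x₀))))
  have hφsurj : Function.Surjective φ := by
    intro z
    obtain ⟨w, rfl⟩ := Submodule.mkQ_surjective J z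
    have hw : w ∈ J ⊔ Submodule.span R {x₀} := hsup ▸ Submodule.mem_top
    obtain ⟨a, ha, b, hb, rfl⟩ := Submodule.mem_sup.1 hw
    obtain ⟨r, rfl⟩ := Submodule.mem_span_singleton.1 hb
    refine ⟨r, ?_⟩
    simp [hφ, Submodule.Quotient.mk_eq_zero, map_add,
      (Submodule.Quotient.mk_eq_zero J).2 ha]
  -- the induced iso R/m ≅ I/J (as R ⧸ ker φ)
  set eL : (R ⧸ LinearMap.ker φ) →ₗ[R] (I ⧸ J) :=
    Submodule.liftQ (LinearMap.ker φ) φ le_rfl with heL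
  have heLb : Function.Bijective eL := by
    constructor
    · rw [← LinearMap.ker_eq_bot, Submodule.ker_liftQ_eq_bot _ _ _ le_rfl]
    · intro z
      obtain ⟨r, hr⟩ := hφsurj z
      exact ⟨Submodule.Quotient.mk r, hr⟩
  set e := LinearEquiv.ofBijective eL heLb with he
  -- the map R/ker φ → R/I induced by multiplication with y
  set ψ : R →ₗ[R] (R ⧸ I) := I.mkQ ∘ₗ LinearMap.toSpanSingleton R R y with hψ
  have hψker : LinearMap.ker φ ≤ LinearMap.ker ψ := by
    rw [hker]
    intro c hc
    simp only [hψ, LinearMap.mem_ker, LinearMap.coe_comp, Function.comp_apply,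
      LinearMap.toSpanSingleton_apply, Submodule.mkQ_apply, Submodule.Quotient.mk_eq_zero]
    simpa [smul_eq_mul] using hmy c hc
  set yMap : (R ⧸ LinearMap.ker φ) →ₗ[R] (R ⧸ I) :=
    Submodule.liftQ (LinearMap.ker φ) ψ hψker with hyMap
  -- the nonzero map
  refine ⟨yMap ∘ₗ (e.symm : (I ⧸ J) →ₗ[R] (R ⧸ LinearMap.ker φ)) ∘ₗ J.mkQ, ?_⟩
  intro h0
  have h1 : e.symm (Submodule.Quotient.mk x₀) = Submodule.Quotient.mk 1 := by
    apply e.injective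
    rw [LinearEquiv.apply_symm_apply]
    refine Eq.symm ?_
    show eL (Submodule.Quotient.mk 1) = Submodule.Quotient.mk x₀
    rw [heL, Submodule.liftQ_apply, hφ1]
  have h2 : (yMap ∘ₗ (e.symm : (I ⧸ J) →ₗ[R] (R ⧸ LinearMap.ker φ)) ∘ₗ J.mkQ) x₀ = 0 := by
    rw [h0]; rfl
  simp only [LinearMap.comp_apply, Submodule.mkQ_apply, LinearEquiv.coe_coe] at h2
  rw [h1] at h2
  have h3 : ψ 1 = 0 := by rwa [hyMap, Submodule.liftQ_apply] at h2
  rw [hψ, LinearMap.comp_apply, LinearMap.toSpanSingleton_apply, one_smul,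
    Submodule.mkQ_apply, Submodule.Quotient.mk_eq_zero] at h3
  exact hy2 h3

/-- In a commutative Noetherian local Artinian Gorenstein (self-injective) ring, a rigid
ideal is `0` or `R`; in particular it is free. -/
theorem rigid_ideal_trivial_artinian_gorenstein {R : Type} [CommRing R] [IsNoetherianRing R]
    [IsLocalRing R] [IsArtinianRing R] (hinj : Module.Injective R R)
    (I : Ideal R)
    (hrigid : Subsingleton (((Ext R (ModuleCat R) 1).obj
      (Opposite.op (ModuleCat.of R I))).obj (ModuleCat.of R I))) :
    (I = ⊥ ∨ I = ⊤) ∧ Module.Free R I := by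
  have hIzero : I = ⊥ ∨ I = ⊤ := by
    by_contra hc
    push_neg at hc
    obtain ⟨hbot, htop⟩ := hc
    obtain ⟨g, hg⟩ := exists_nonzero_hom I hbot htop
    exact hg (hom_to_quotient_eq_zero hinj I hrigid g)
  refine ⟨hIzero, ?_⟩
  rcases hIzero with h | h
  · have : Subsingleton I := by rw [h]; infer_instance
    infer_instance
  · subst h
    exact Module.Free.of_equiv Submodule.topEquiv.symm
end
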